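/- arXiv:0911.0286 — 2 statements merged into one kernel-verified Lean document; each statement's English description precedes it below -/
import Mathlib

section
/- Let F(x) ∈ 𝓞[x] be a monic irreducible polynomial with root θ ∈ K̄, of depth r. If [F_1, …, F_r] and [F'_1, …, F'_r] are two Okutsu frames of F, then v(F_i(θ)) = v(F'_i(θ)) for every 1 ≤ i ≤ r; that is, the rational numbers 0 < v(F_1(θ)) < ⋯ < v(F_r(θ)) depend only on F(x). -/
open Polynomial

noncomputable section

/-- A local field `K` of characteristic zero, presented through the canonical extension `v`
of its normalized discrete valuation (additively written, `v(K*) = ℤ`) to a fixed algebraic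
closure of `K`.  The axioms state that `v` is an additive valuation on the algebraic closure,
that its restriction to `K` is a surjective discrete valuation onto `ℤ` (plus `⊤` at `0`),
that it is invariant under `K`-automorphisms (a property of the canonical extension), that
`K` is complete and that its residue field is finite. -/
structure OkutsuSetup (K : Type) [Field K] [CharZero K] : Type where
  v : AlgebraicClosure K → WithTop ℚ
  v_eq_top_iff : ∀ x, v x = ⊤ ↔ x = 0
  v_mul : ∀ x y, v (x * y) = v x + v y
  v_min_le_add : ∀ x y, min (v x) (v y) ≤ v (x + y)
  v_neg : ∀ x, v (-x) = v x
  v_one : v 1 = 0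
  v_base_int : ∀ x : K, x ≠ 0 →
    ∃ k : ℤ, v (algebraMap K (AlgebraicClosure K) x) = ((k : ℚ) : WithTop ℚ)
  v_base_one : ∃ x : K, v (algebraMap K (AlgebraicClosure K) x) = ((1 : ℚ) : WithTop ℚ)
  v_aut_invariant : ∀ (M : IntermediateField K (AlgebraicClosure K)) (σ : ↥M ≃ₐ[K] ↥M)
    (x : ↥M), v ((σ x : ↥M) : AlgebraicClosure K) = v ((x : ↥M) : AlgebraicClosure K)
  complete : ∀ a : ℕ → K,
    (∀ N : ℚ, ∃ M : ℕ, ∀ p q : ℕ, M ≤ p → M ≤ q →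
      ((N : ℚ) : WithTop ℚ) < v (algebraMap K (AlgebraicClosure K) (a p - a q))) →
    ∃ b : K, ∀ N : ℚ, ∃ M : ℕ, ∀ p : ℕ, M ≤ p →
      ((N : ℚ) : WithTop ℚ) < v (algebraMap K (AlgebraicClosure K) (a p - b))
  finite_residue : ∃ T : Finset K, ∀ x : K,
    0 ≤ v (algebraMap K (AlgebraicClosure K) x) →
    ∃ y ∈ T, 0 < v (algebraMap K (AlgebraicClosure K) (x - y))

namespace OkutsuSetup

variable {K : Type} [Field K] [CharZero K]

/-- The valuation of `K` itself. -/
def vK (S : OkutsuSetup K) (x : K) : WithTop ℚ :=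
  S.v (algebraMap K (AlgebraicClosure K) x)

/-- The ring of integers `𝓞` of `K`. -/
def integers (S : OkutsuSetup K) : Subring K where
  carrier := {x : K | 0 ≤ S.vK x}
  zero_mem' := by
    show (0 : WithTop ℚ) ≤ S.vK 0
    unfold vK
    rw [map_zero, (S.v_eq_top_iff 0).mpr rfl]
    exact le_top
  one_mem' := by
    show (0 : WithTop ℚ) ≤ S.vK 1
    unfold vK
    rw [map_one, S.v_one]
  add_mem' := by
    intro a b ha hb
    show (0 : WithTop ℚ) ≤ S.vK (a + b)
    unfold vK
    rw [map_add]
    exact le_trans (le_min ha hb) (S.v_min_le_add _ _)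
  mul_mem' := by
    intro a b ha hb
    show (0 : WithTop ℚ) ≤ S.vK (a * b)
    unfold vK
    rw [map_mul, S.v_mul]
    exact add_nonneg ha hb
  neg_mem' := by
    intro a ha
    show (0 : WithTop ℚ) ≤ S.vK (-a)
    unfold vK
    rw [map_neg, S.v_neg]
    exact ha

/-- The maximal ideal `𝔪` of the ring of integers of `K`. -/
def maximalIdeal (S : OkutsuSetup K) : Ideal S.integers where
  carrier := {x : S.integers | 0 < S.vK (x : K)}
  zero_mem' := by
    show (0 : WithTop ℚ) < S.vK ((0 : S.integers) : K)
    have h0 : ((0 : S.integers) : K) = (0 : K) := rfl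
    rw [h0]
    unfold vK
    rw [map_zero, (S.v_eq_top_iff 0).mpr rfl]
    exact WithTop.coe_lt_top 0
  add_mem' := by
    intro a b ha hb
    show (0 : WithTop ℚ) < S.vK ((a : K) + (b : K))
    refine lt_of_lt_of_le (lt_min ha hb) ?_
    unfold vK
    rw [map_add]
    exact S.v_min_le_add _ _
  smul_mem' := by
    intro c x hx
    show (0 : WithTop ℚ) < S.vK ((c : K) * (x : K))
    unfold vK
    rw [map_mul, S.v_mul]
    calc (0 : WithTop ℚ) < S.v (algebraMap K (AlgebraicClosure K) (x : K)) := hx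
    _ ≤ _ + _ := le_add_of_nonneg_left c.2

/-- The residue field `𝓞/𝔪` of `K`. -/
abbrev Residue (S : OkutsuSetup K) : Type :=
  S.integers ⧸ S.maximalIdeal

/-- The residue characteristic of `K`. -/
def resChar (S : OkutsuSetup K) : ℕ :=
  ringChar S.Residue

/-- Reduction of a polynomial with integer coefficients modulo `𝔪`. -/
def reduce (S : OkutsuSetup K) (F : Polynomial S.integers) : Polynomial S.Residue :=
  F.map (Ideal.Quotient.mk S.maximalIdeal)

/-- Evaluation of a polynomial with coefficients in `𝓞` at a point of the algebraic
closure of `K`. -/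
def evalK (S : OkutsuSetup K) (F : Polynomial S.integers) (θ : AlgebraicClosure K) :
    AlgebraicClosure K :=
  Polynomial.aeval θ (F.map S.integers.subtype)

/-- `v(g)` for a polynomial `g`: the minimum of the valuations of its coefficients. -/
def vPoly (S : OkutsuSetup K) (g : Polynomial S.integers) : WithTop ℚ :=
  (Finset.range (g.natDegree + 1)).inf fun i => S.vK ((g.coeff i : K))

/-- The ramification index `e(E/K)` of a finite subextension `E` of `K̄/K`: the least
positive integer `e` such that all values of `v` on `E*` lie in `(1/e)ℤ`. -/
def ramIdx (S : OkutsuSetup K) (E : IntermediateField K (AlgebraicClosure K)) : ℕ :=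
  sInf {e : ℕ | 0 < e ∧ ∀ x ∈ E, x ≠ (0 : AlgebraicClosure K) →
    ∃ k : ℤ, S.v x = (((k : ℚ) / (e : ℚ) : ℚ) : WithTop ℚ)}

/-- The residual degree `f(E/K)` of a finite subextension `E` of `K̄/K`; since `K` is a
complete discretely valued field, `[E : K] = e(E/K)·f(E/K)`. -/
def resDeg (S : OkutsuSetup K) (E : IntermediateField K (AlgebraicClosure K)) : ℕ :=
  Module.finrank K E / S.ramIdx E

/-- A subextension `E/K` is tamely ramified when its ramification index is prime to the
residue characteristic of `K`. -/
def IsTame (S : OkutsuSetup K) (E : IntermediateField K (AlgebraicClosure K)) : Prop :=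
  Nat.Coprime (S.ramIdx E) S.resChar

/-- The Okutsu invariants `m_0 = 1 ≤ m_1 < ⋯ < m_r < m_{r+1} = n` and
`μ_0 = 0 < μ_1 < ⋯ < μ_r < μ_{r+1} = ∞` of a monic irreducible polynomial of degree `n`
with root `θ`:  `m i` is the least `[K(η):K]` over `η` with `v(θ-η) > μ (i-1)`, and
`μ i` is the greatest value of `v(θ-η)` over `η` with `[K(η):K] = m i`.
`r` is the depth: the number of indices `i ≥ 1` with `m i < n`. -/
structure OkutsuData (S : OkutsuSetup K) (θ : AlgebraicClosure K) (n : ℕ) : Type where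
  r : ℕ
  m : ℕ → ℕ
  μ : ℕ → WithTop ℚ
  m_zero : m 0 = 1
  mu_zero : μ 0 = 0
  m_isLeast : ∀ i, 1 ≤ i → i ≤ r + 1 →
    IsLeast {d : ℕ | ∃ η : AlgebraicClosure K,
      (minpoly K η).natDegree = d ∧ μ (i - 1) < S.v (θ - η)} (m i)
  mu_isGreatest : ∀ i, 1 ≤ i → i ≤ r + 1 →
    IsGreatest {c : WithTop ℚ | ∃ η : AlgebraicClosure K,
      (minpoly K η).natDegree = m i ∧ S.v (θ - η) = c} (μ i)
  m_lt_n : ∀ i, 1 ≤ i → i ≤ r → m i < n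
  m_last : m (r + 1) = n

/-- `[F_1, …, F_r]` is an Okutsu frame of the monic irreducible polynomial with root `θ`
and Okutsu invariants `D`: for each `1 ≤ i ≤ r`, `F_i` is the minimal polynomial of some
`α_i ∈ K̄` with `[K(α_i):K] = m_i` and `v(θ - α_i) = μ_i`. -/
def IsFrame (S : OkutsuSetup K) {θ : AlgebraicClosure K} {n : ℕ} (D : OkutsuData S θ n)
    (Fr : ℕ → Polynomial S.integers) : Prop :=
  ∀ i, 1 ≤ i → i ≤ D.r → ∃ α : AlgebraicClosure K,
    (minpoly K α).natDegree = D.m i ∧ S.v (θ - α) = D.μ i ∧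
      (Fr i).map S.integers.subtype = minpoly K α

/-- `φ` is a Montes approximation to the monic irreducible polynomial `F`:  a monic
irreducible polynomial of the same degree `n` having a root `α` with `v(θ - α) > μ_r`,
where `θ` is a root of `F`. -/
def IsMontesApprox (S : OkutsuSetup K) (F φ : Polynomial S.integers) : Prop :=
  φ.Monic ∧ Irreducible (φ.map S.integers.subtype) ∧ φ.natDegree = F.natDegree ∧
    ∃ θ : AlgebraicClosure K, S.evalK F θ = 0 ∧
      ∃ D : OkutsuData S θ F.natDegree, ∃ α : AlgebraicClosure K,
        S.evalK φ α = 0 ∧ D.μ D.r < S.v (θ - α)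

end OkutsuSetup

/-!
Write `f_α` for the minimal polynomial of `α` and `μ = v(θ - α)`. If `α` is closest to `θ` among
the elements of its degree, then every conjugate `β` of `α` satisfies
`v(θ - β) = min(μ, v(α - β))`, so `v(f_α(θ)) = ∑_β min(μ, v(α - β))` depends on `θ` only
through `μ`. For a second optimal `α'` of the same degree we have `v(α - α') ≥ μ`, so `α` may be
replaced by `α'` inside each `min`; what remains is the symmetry
`∑_{f_α(β) = 0} min(μ, v(α' - β)) = ∑_{f_{α'}(β') = 0} min(μ, v(α - β'))`, which follows by
summing `min(μ, v(β - β'))` over all pairs of conjugates: since `v` is invariant under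
`Gal(K̄/K)`, each inner sum is independent of the conjugate it is taken at.
-/

instance WithTop.isAddTorsionFree {α : Type*} [AddMonoid α] [IsAddTorsionFree α] :
    IsAddTorsionFree (WithTop α) where
  nsmul_right_injective n hn a b h := by
    have htop : n • (⊤ : WithTop α) = ⊤ := by
      obtain ⟨k, rfl⟩ := Nat.exists_eq_add_one_of_ne_zero hn
      rfl
    simp only at h
    induction a using WithTop.recTopCoe <;> induction b using WithTop.recTopCoe
    · rfl
    · exact absurd h (by rw [htop, ← WithTop.coe_nsmul]; exact WithTop.top_ne_coe)
    · exact absurd h (by rw [htop, ← WithTop.coe_nsmul]; exact WithTop.coe_ne_top)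
    · rw [← WithTop.coe_nsmul, ← WithTop.coe_nsmul, WithTop.coe_inj] at h
      exact congrArg _ (nsmul_right_injective hn h)

theorem Polynomial.aroots_map_algEquiv {K L : Type*} [Field K] [Field L] [IsAlgClosed L]
    [Algebra K L] (f : K[X]) (σ : L ≃ₐ[K] L) : (f.aroots L).map σ = f.aroots L := by
  have h := roots_map_of_injective_of_card_eq_natDegree (f := (σ : L →+* L)) σ.injective
    (IsAlgClosed.card_roots_eq_natDegree (p := f.map (algebraMap K L)))
  have hcomm : (σ : L →+* L).comp (algebraMap K L) = algebraMap K L :=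
    RingHom.ext σ.commutes
  rwa [map_map, hcomm] at h

namespace OkutsuSetup

variable {K : Type} [Field K] [CharZero K] (S : OkutsuSetup K)

theorem v_sub_comm (x y : AlgebraicClosure K) : S.v (x - y) = S.v (y - x) := by
  rw [← neg_sub, S.v_neg]

theorem min_le_v_sub (x y : AlgebraicClosure K) : min (S.v x) (S.v y) ≤ S.v (x - y) := by
  simpa only [S.v_neg, ← sub_eq_add_neg] using S.v_min_le_add x (-y)

theorem min_v_le_of_le_v_sub {μ : WithTop ℚ} {x y : AlgebraicClosure K}
    (h : μ ≤ S.v (x - y)) : min μ (S.v x) ≤ min μ (S.v y) := by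
  refine le_min (min_le_left _ _) ?_
  calc min μ (S.v x) ≤ min (S.v x) (S.v (x - y)) :=
        le_min (min_le_right _ _) ((min_le_left _ _).trans h)
    _ ≤ S.v (x - (x - y)) := S.min_le_v_sub _ _
    _ = S.v y := by rw [sub_sub_cancel]

theorem min_v_eq_of_le_v_sub {μ : WithTop ℚ} {x y : AlgebraicClosure K}
    (h : μ ≤ S.v (x - y)) : min μ (S.v x) = min μ (S.v y) :=
  le_antisymm (S.min_v_le_of_le_v_sub h) (S.min_v_le_of_le_v_sub (S.v_sub_comm x y ▸ h))

theorem v_multiset_prod (s : Multiset (AlgebraicClosure K)) :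
    S.v s.prod = (s.map S.v).sum := by
  induction s using Multiset.induction_on with
  | empty => simpa using S.v_one
  | cons a s ih => rw [Multiset.prod_cons, S.v_mul, Multiset.map_cons, Multiset.sum_cons, ih]

theorem v_algEquiv_apply (σ : AlgebraicClosure K ≃ₐ[K] AlgebraicClosure K)
    (x : AlgebraicClosure K) : S.v (σ x) = S.v x := by
  let e := IntermediateField.topEquiv (F := K) (E := AlgebraicClosure K)
  simpa [e] using S.v_aut_invariant ⊤ ((e.trans σ).trans e.symm) (e.symm x)

theorem v_aeval_eq_sum_aroots {f : K[X]} (hf : f.Monic) (θ : AlgebraicClosure K) :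
    S.v (aeval θ f) = ((f.aroots (AlgebraicClosure K)).map fun β => S.v (θ - β)).sum := by
  have hsplit := prod_multiset_X_sub_C_of_monic_of_roots_card_eq
    (hf.map (algebraMap K (AlgebraicClosure K))) IsAlgClosed.card_roots_eq_natDegree
  rw [aeval_def, ← eval_map, ← hsplit, eval_multiset_prod, S.v_multiset_prod, Multiset.map_map,
    Multiset.map_map]
  simp [Function.comp_def, aroots]

/-- `v(f(ξ))` for monic `f`, computed root by root with each term truncated at `μ`. -/
def truncVal (μ : WithTop ℚ) (f : K[X]) (ξ : AlgebraicClosure K) : WithTop ℚ :=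
  ((f.aroots (AlgebraicClosure K)).map fun β => min μ (S.v (ξ - β))).sum

variable {S}

theorem truncVal_congr {μ : WithTop ℚ} (f : K[X]) {ξ ξ' : AlgebraicClosure K}
    (h : μ ≤ S.v (ξ - ξ')) : S.truncVal μ f ξ = S.truncVal μ f ξ' := by
  refine congrArg Multiset.sum (Multiset.map_congr rfl fun β _ => S.min_v_eq_of_le_v_sub ?_)
  rwa [sub_sub_sub_cancel_right]

theorem truncVal_algEquiv_apply (μ : WithTop ℚ) (f : K[X])
    (σ : AlgebraicClosure K ≃ₐ[K] AlgebraicClosure K) (ξ : AlgebraicClosure K) :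
    S.truncVal μ f (σ ξ) = S.truncVal μ f ξ := by
  conv_lhs => rw [truncVal, ← aroots_map_algEquiv f σ, Multiset.map_map]
  simp only [Function.comp_def, ← map_sub, S.v_algEquiv_apply]
  rfl

theorem sum_truncVal_aroots_comm (μ : WithTop ℚ) (f g : K[X]) :
    ((g.aroots (AlgebraicClosure K)).map (S.truncVal μ f)).sum =
      ((f.aroots (AlgebraicClosure K)).map (S.truncVal μ g)).sum := by
  unfold truncVal
  rw [Multiset.sum_map_sum_map]
  simp only [S.v_sub_comm]

theorem sum_truncVal_aroots_minpoly (μ : WithTop ℚ) (f : K[X]) (α : AlgebraicClosure K) :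
    (((minpoly K α).aroots (AlgebraicClosure K)).map (S.truncVal μ f)).sum =
      (minpoly K α).natDegree • S.truncVal μ f α := by
  have hconj : ∀ β ∈ (minpoly K α).aroots (AlgebraicClosure K),
      S.truncVal μ f β = S.truncVal μ f α := by
    intro β hβ
    obtain ⟨σ, rfl⟩ := minpoly.exists_algEquiv_of_root' (Algebra.IsAlgebraic.isAlgebraic α)
      (mem_aroots.mp hβ).2
    exact truncVal_algEquiv_apply μ f σ α
  rw [Multiset.map_congr rfl hconj, Multiset.map_const', Multiset.sum_replicate,
    IsAlgClosed.card_aroots_eq_natDegree]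

theorem truncVal_minpoly_comm (μ : WithTop ℚ) {α α' : AlgebraicClosure K}
    (hdeg : (minpoly K α).natDegree = (minpoly K α').natDegree) :
    S.truncVal μ (minpoly K α) α' = S.truncVal μ (minpoly K α') α := by
  have hpos := minpoly.natDegree_pos (Algebra.IsIntegral.isIntegral (R := K) α)
  apply nsmul_right_injective hpos.ne'
  dsimp only
  rw [← sum_truncVal_aroots_minpoly, sum_truncVal_aroots_comm, hdeg, sum_truncVal_aroots_minpoly]

variable (S) in
def IsOptimalApprox (θ α : AlgebraicClosure K) : Prop :=
  ∀ η : AlgebraicClosure K, (minpoly K η).natDegree = (minpoly K α).natDegree →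
    S.v (θ - η) ≤ S.v (θ - α)

namespace IsOptimalApprox

variable {θ α α' : AlgebraicClosure K}

theorem v_sub_eq (hα : S.IsOptimalApprox θ α) (hα' : S.IsOptimalApprox θ α')
    (hdeg : (minpoly K α).natDegree = (minpoly K α').natDegree) :
    S.v (θ - α) = S.v (θ - α') :=
  le_antisymm (hα' α hdeg) (hα α' hdeg.symm)

theorem v_sub_conj_eq_min (hα : S.IsOptimalApprox θ α) {β : AlgebraicClosure K}
    (hβ : aeval β (minpoly K α) = 0) : S.v (θ - β) = min (S.v (θ - α)) (S.v (α - β)) := by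
  have hint := Algebra.IsIntegral.isIntegral (R := K) α
  have hminpoly : minpoly K β = minpoly K α :=
    (minpoly.eq_of_irreducible_of_monic (minpoly.irreducible hint) hβ (minpoly.monic hint)).symm
  have hle : S.v (θ - β) ≤ S.v (θ - α) := hα β (by rw [hminpoly])
  rw [← min_eq_right hle]
  exact S.min_v_eq_of_le_v_sub (by rw [sub_sub_sub_cancel_right])

theorem v_aeval_minpoly (hα : S.IsOptimalApprox θ α) :
    S.v (aeval θ (minpoly K α)) = S.truncVal (S.v (θ - α)) (minpoly K α) α := by
  rw [S.v_aeval_eq_sum_aroots (minpoly.monic (Algebra.IsIntegral.isIntegral α))]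
  exact congrArg Multiset.sum
    (Multiset.map_congr rfl fun β hβ => hα.v_sub_conj_eq_min (mem_aroots.mp hβ).2)

theorem v_aeval_minpoly_eq (hα : S.IsOptimalApprox θ α) (hα' : S.IsOptimalApprox θ α')
    (hdeg : (minpoly K α).natDegree = (minpoly K α').natDegree) :
    S.v (aeval θ (minpoly K α)) = S.v (aeval θ (minpoly K α')) := by
  have hv : S.v (θ - α') = S.v (θ - α) := (hα.v_sub_eq hα' hdeg).symm
  have hclose : S.v (θ - α) ≤ S.v (α - α') := by
    simpa only [hv, min_self, sub_sub_sub_cancel_left] using S.min_le_v_sub (θ - α') (θ - α)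
  calc S.v (aeval θ (minpoly K α))
      = S.truncVal (S.v (θ - α)) (minpoly K α) α := hα.v_aeval_minpoly
    _ = S.truncVal (S.v (θ - α)) (minpoly K α) α' := truncVal_congr _ hclose
    _ = S.truncVal (S.v (θ - α)) (minpoly K α') α := truncVal_minpoly_comm _ hdeg
    _ = S.truncVal (S.v (θ - α)) (minpoly K α') α' :=
        truncVal_congr _ (S.v_sub_comm α α' ▸ hclose)
    _ = S.v (aeval θ (minpoly K α')) := by rw [hα'.v_aeval_minpoly, hv]

end IsOptimalApprox

theorem OkutsuData.isOptimalApprox {θ : AlgebraicClosure K} {n : ℕ} (D : OkutsuData S θ n)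
    {i : ℕ} (hi₁ : 1 ≤ i) (hi : i ≤ D.r + 1) {α : AlgebraicClosure K}
    (hdeg : (minpoly K α).natDegree = D.m i) (hv : S.v (θ - α) = D.μ i) :
    S.IsOptimalApprox θ α :=
  fun η hη => hv ▸ (D.mu_isGreatest i hi₁ hi).2 ⟨η, hη.trans hdeg, rfl⟩

end OkutsuSetup

open OkutsuSetup in
theorem okutsu_stmt_14_general {K : Type} [Field K] [CharZero K] (S : OkutsuSetup K)
    (n : ℕ)
    (θ : AlgebraicClosure K)
    (D : OkutsuData S θ n)
    (Fr Fr' : ℕ → Polynomial S.integers)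
    (hFr : S.IsFrame D Fr) (hFr' : S.IsFrame D Fr') :
    ∀ i, 1 ≤ i → i ≤ D.r → S.v (S.evalK (Fr i) θ) = S.v (S.evalK (Fr' i) θ) := by
  intro i hi₁ hi
  obtain ⟨α, hdeg, hv, hFrα⟩ := hFr i hi₁ hi
  obtain ⟨α', hdeg', hv', hFrα'⟩ := hFr' i hi₁ hi
  have hα := D.isOptimalApprox hi₁ (Nat.le_succ_of_le hi) hdeg hv
  have hα' := D.isOptimalApprox hi₁ (Nat.le_succ_of_le hi) hdeg' hv'
  rw [evalK, evalK, hFrα, hFrα']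
  exact hα.v_aeval_minpoly_eq hα' (hdeg.trans hdeg'.symm)

open OkutsuSetup in
/-- Let `F ∈ 𝓞[x]` be monic irreducible with root `θ`, of depth `r`.
If `[F_1, …, F_r]` and `[F'_1, …, F'_r]` are two Okutsu frames of `F`, then
`v(F_i(θ)) = v(F'_i(θ))` for every `1 ≤ i ≤ r`; that is, the rational numbers
`0 < v(F_1(θ)) < ⋯ < v(F_r(θ))` depend only on `F`. -/
theorem okutsu_stmt_14 {K : Type} [Field K] [CharZero K] (S : OkutsuSetup K)
    (F : Polynomial S.integers) (hFmonic : F.Monic)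
    (hFirr : Irreducible (F.map S.integers.subtype))
    (n : ℕ) (hFdeg : F.natDegree = n)
    (θ : AlgebraicClosure K) (hθ : S.evalK F θ = 0)
    (D : OkutsuData S θ n)
    (Fr Fr' : ℕ → Polynomial S.integers)
    (hFr : S.IsFrame D Fr) (hFr' : S.IsFrame D Fr') :
    ∀ i, 1 ≤ i → i ≤ D.r → S.v (S.evalK (Fr i) θ) = S.v (S.evalK (Fr' i) θ) :=
  okutsu_stmt_14_general S n θ D Fr Fr' hFr hFr'
end
end

section
/- Let F(x) ∈ 𝓞[x] be a monic irreducible polynomial of degree n with root θ ∈ K̄, of depth r, with Okutsu invariants m_i, μ_i and an Okutsu frame whose last polynomial is F_r(x). For a polynomial φ(x) ∈ 𝓞[x], the following two conditions are equivalent: (i) φ(x) is monic irreducible of degree n and has a root α ∈ K̄ with v(θ − α) > μ_r; (ii) φ(x) is monic irreducible of degree n and v(φ(θ)) > (n/m_r) · v(F_r(θ)). -/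
open Polynomial

noncomputable section

/-!
For monic irreducible `F, φ ∈ K[x]` of the same degree with roots `θ, α`, the Galois invariance
of `v` makes `v(φ(θ)) = v(F(α)) = ∑_{F(z)=0} v(α - z)` (the two sides are the valuation of the
resultant divided by the common degree). Comparing this sum termwise with
`∑_{F(z)=0} min(v(θ - z), μ)` shows that `φ` has a root `α` with `v(θ - α) > μ` if and only if
`v(φ(θ))` exceeds that sum; for the converse one takes the root of `φ` closest to `θ`.

For `μ = μ_r` the sum is `(n/m_r)·v(F_r(θ))`. In depth `r ≥ 1`, the minimality of `m_{r+1} = n`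
forces `v(θ - σ α_r) ≤ μ_r` for every conjugate of `α_r`, hence `v(α_r - z) = min(v(θ - z), μ_r)`
for every root `z` of `F`, so the sum is `v(F(α_r)) = (n/m_r)·v(F_r(θ))`. In depth `0` it
vanishes, as does `v(F_0(θ)) = v(1)`, because the roots of a monic polynomial over `𝓞` are
integral.
-/

theorem WithTop.nsmul_top {α : Type*} [AddMonoid α] {k : ℕ} (hk : k ≠ 0) :
    k • (⊤ : WithTop α) = ⊤ := by
  obtain ⟨j, rfl⟩ := Nat.exists_eq_succ_of_ne_zero hk
  rw [succ_nsmul, WithTop.add_top]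

theorem WithTop.nsmul_right_injective {α : Type*} [AddMonoid α] [IsAddTorsionFree α] {k : ℕ}
    (hk : k ≠ 0) : Function.Injective fun x : WithTop α => k • x := by
  intro x y h
  induction x <;> induction y <;>
    simp_all [← WithTop.coe_nsmul, WithTop.nsmul_top hk, nsmul_right_inj hk]

theorem WithTop.exists_coe_eq_and_eq_div_mul {n m : ℕ} (hn : n ≠ 0) (hm : m ≠ 0)
    {x T : WithTop ℚ} (hT : T ≠ ⊤) (h : n • x = m • T) :
    ∃ c : ℚ, x = c ∧ T = ((n / m * c : ℚ) : WithTop ℚ) := by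
  lift T to ℚ using hT
  lift x to ℚ using fun hx => by
    rw [hx, WithTop.nsmul_top hn, ← WithTop.coe_nsmul] at h
    exact WithTop.top_ne_coe h
  rw [← WithTop.coe_nsmul, ← WithTop.coe_nsmul, WithTop.coe_inj, nsmul_eq_mul,
    nsmul_eq_mul] at h
  refine ⟨x, rfl, WithTop.coe_inj.2 ?_⟩
  field_simp
  linarith

theorem Multiset.sum_map_min_ne_top {ι : Type*} (s : Multiset ι) (f : ι → WithTop ℚ)
    {μ : WithTop ℚ} (hμ : μ ≠ ⊤) : (s.map fun i => min (f i) μ).sum ≠ ⊤ := by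
  obtain ⟨q, rfl⟩ := WithTop.ne_top_iff_exists.1 hμ
  refine ne_top_of_le_ne_top (b := Multiset.card s • (q : WithTop ℚ)) ?_ ?_
  · rw [← WithTop.coe_nsmul]
    exact WithTop.coe_ne_top
  · simpa using Multiset.sum_le_card_nsmul (s.map fun i => min (f i) (q : WithTop ℚ)) q
      (by simp)

theorem Polynomial.exists_algEquiv_apply_eq_of_mem_aroots {K L : Type*} [Field K] [Field L]
    [Algebra K L] [Normal K L] {p : K[X]} (hp : Irreducible p) (hpm : p.Monic) {z z' : L}
    (hz : z ∈ p.aroots L) (hz' : z' ∈ p.aroots L) : ∃ σ : L ≃ₐ[K] L, σ z = z' := by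
  have hmin : minpoly K z' = p :=
    (minpoly.eq_of_irreducible_of_monic hp (mem_aroots.1 hz').2 hpm).symm
  exact minpoly.exists_algEquiv_of_root (Algebra.IsAlgebraic.isAlgebraic z')
    (hmin ▸ (mem_aroots.1 hz).2)

namespace AddValuation

section Field

variable {L Γ : Type*} [Field L] [LinearOrderedAddCommMonoidWithTop Γ] (v : AddValuation L Γ)

theorem map_multiset_prod (s : Multiset L) : v s.prod = (s.map v).sum := by
  induction s using Multiset.induction_on with
  | empty => simp
  | cons a s ih => simp [v.map_mul, ih]

theorem map_sub_eq_min_of_le {a b c : L} (h : v (b - c) ≤ v (a - b)) :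
    v (b - c) = min (v (a - c)) (v (a - b)) := by
  rcases h.lt_or_eq with h | h
  · have hac : v (a - c) = v (b - c) := by
      rw [← sub_add_sub_cancel a b c]
      exact v.map_add_eq_of_lt_right h
    rw [hac, min_eq_left h.le]
  · have hac : v (a - b) ≤ v (a - c) := by
      rw [← sub_add_sub_cancel a b c]
      exact v.map_le_add le_rfl h.ge
    rw [min_eq_right hac, h]

variable {K : Type*} [Field K] [Algebra K L] [IsAlgClosed L]

theorem map_aeval_eq_sum_aroots {p : K[X]} (hp : p.Monic) (x : L) :
    v (aeval x p) = ((p.aroots L).map fun z => v (x - z)).sum := by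
  rw [(IsAlgClosed.splits _).aeval_eq_prod_aroots_of_monic hp, map_multiset_prod,
    Multiset.map_map]
  rfl

theorem sum_aroots_map_aeval_comm {p q : K[X]} (hp : p.Monic) (hq : q.Monic) :
    ((p.aroots L).map fun z => v (aeval z q)).sum =
      ((q.aroots L).map fun w => v (aeval w p)).sum := by
  simp only [v.map_aeval_eq_sum_aroots hp, v.map_aeval_eq_sum_aroots hq]
  rw [Multiset.sum_map_sum_map]
  simp only [v.map_sub_swap]

end Field

theorem nonneg_of_isIntegral {R L Γ : Type*} [CommRing R] [Field L]
    [LinearOrderedAddCommGroupWithTop Γ] [Algebra R L] (v : AddValuation L Γ)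
    (hR : ∀ r, 0 ≤ v (algebraMap R L r)) {x : L} (hx : IsIntegral R x) : 0 ≤ v x := by
  set w := AddValuation.toValuation v
  have hmem : ∀ y, y ∈ w.integer ↔ 0 ≤ v y := fun y => by
    rw [Valuation.mem_integer_iff, AddValuation.toValuation_apply, ← ofAdd_zero,
      Multiplicative.ofAdd_le]
    exact OrderDual.toDual_le_toDual
  let φ : R →+* w.integer := (algebraMap R L).codRestrict w.integer fun r => (hmem _).2 (hR r)
  exact (hmem x).1 ((Valuation.integer.integers w).mem_of_integral
    (IsIntegral.map_of_comp_eq φ (RingHom.id L) rfl hx))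

section Galois

variable {K L Γ : Type*} [Field K] [Field L] [Algebra K L] [Normal K L]
  [LinearOrderedAddCommMonoidWithTop Γ] (v : AddValuation L Γ)

theorem map_aeval_eq_of_mem_aroots (hv : ∀ (σ : L ≃ₐ[K] L) (x : L), v (σ x) = v x)
    {p : K[X]} (hp : Irreducible p) (hpm : p.Monic) {z z' : L} (hz : z ∈ p.aroots L)
    (hz' : z' ∈ p.aroots L) (q : K[X]) : v (aeval z q) = v (aeval z' q) := by
  obtain ⟨σ, rfl⟩ := exists_algEquiv_apply_eq_of_mem_aroots hp hpm hz hz'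
  rw [aeval_algHom_apply σ, hv]

variable [IsAlgClosed L]

theorem sum_aroots_map_aeval_eq_nsmul (hv : ∀ (σ : L ≃ₐ[K] L) (x : L), v (σ x) = v x)
    {p : K[X]} (hp : Irreducible p) (hpm : p.Monic) {x : L} (hx : x ∈ p.aroots L) (q : K[X]) :
    ((p.aroots L).map fun z => v (aeval z q)).sum = p.natDegree • v (aeval x q) := by
  rw [Multiset.map_congr rfl fun z hz => v.map_aeval_eq_of_mem_aroots hv hp hpm hz hx q,
    Multiset.map_const', Multiset.sum_replicate, IsAlgClosed.card_aroots_eq_natDegree]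

theorem natDegree_nsmul_map_aeval_comm (hv : ∀ (σ : L ≃ₐ[K] L) (x : L), v (σ x) = v x)
    {p q : K[X]} (hp : Irreducible p) (hpm : p.Monic) (hq : Irreducible q) (hqm : q.Monic)
    {x w : L} (hx : x ∈ p.aroots L) (hw : w ∈ q.aroots L) :
    p.natDegree • v (aeval x q) = q.natDegree • v (aeval w p) := by
  rw [← v.sum_aroots_map_aeval_eq_nsmul hv hp hpm hx,
    ← v.sum_aroots_map_aeval_eq_nsmul hv hq hqm hw, v.sum_aroots_map_aeval_comm hpm hqm]

end Galois

section Threshold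

variable {K L : Type*} [Field K] [Field L] [Algebra K L] (v : AddValuation L (WithTop ℚ))

def sumMinDist (p : K[X]) (θ : L) (μ : WithTop ℚ) : WithTop ℚ :=
  ((p.aroots L).map fun z => min (v (θ - z)) μ).sum

theorem sumMinDist_ne_top (p : K[X]) (θ : L) {μ : WithTop ℚ} (hμ : μ ≠ ⊤) :
    v.sumMinDist p θ μ ≠ ⊤ :=
  Multiset.sum_map_min_ne_top _ _ hμ

variable [IsAlgClosed L] [Normal K L]

theorem map_aeval_eq_of_natDegree_eq (hv : ∀ (σ : L ≃ₐ[K] L) (x : L), v (σ x) = v x)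
    {F φ : K[X]} (hF : Irreducible F) (hFm : F.Monic) (hφ : Irreducible φ) (hφm : φ.Monic)
    (hdeg : φ.natDegree = F.natDegree) {θ α : L} (hθ : θ ∈ F.aroots L)
    (hα : α ∈ φ.aroots L) : v (aeval θ φ) = v (aeval α F) := by
  have h := v.natDegree_nsmul_map_aeval_comm hv hF hFm hφ hφm hθ hα
  rw [hdeg] at h
  exact WithTop.nsmul_right_injective hF.natDegree_pos.ne' h

theorem sumMinDist_lt_map_aeval (hv : ∀ (σ : L ≃ₐ[K] L) (x : L), v (σ x) = v x)
    {F φ : K[X]} (hF : Irreducible F) (hFm : F.Monic) (hφ : Irreducible φ) (hφm : φ.Monic)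
    (hdeg : φ.natDegree = F.natDegree) {θ α : L} (hθ : θ ∈ F.aroots L)
    (hα : α ∈ φ.aroots L) {μ : WithTop ℚ} (hμ : μ ≠ ⊤) (hlt : μ < v (θ - α)) :
    v.sumMinDist F θ μ < v (aeval θ φ) := by
  rw [v.map_aeval_eq_of_natDegree_eq hv hF hFm hφ hφm hdeg hθ hα, v.map_aeval_eq_sum_aroots hFm,
    sumMinDist]
  obtain ⟨t, ht⟩ := Multiset.exists_cons_of_mem hθ
  rw [ht, Multiset.map_cons, Multiset.map_cons, Multiset.sum_cons, Multiset.sum_cons, sub_self,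
    v.map_zero, min_eq_right le_top, v.map_sub_swap]
  refine WithTop.add_lt_add_of_lt_of_le (Multiset.sum_map_min_ne_top _ _ hμ) hlt
    (Multiset.sum_map_le_sum_map _ _ fun z _ => ?_)
  calc min (v (θ - z)) μ ≤ min (v (α - θ)) (v (θ - z)) := by
        rw [min_comm, v.map_sub_swap α]
        exact min_le_min_right _ hlt.le
    _ ≤ v (α - z) := by
        rw [← sub_add_sub_cancel α θ z]
        exact v.map_add _ _

theorem exists_lt_of_sumMinDist_lt (hv : ∀ (σ : L ≃ₐ[K] L) (x : L), v (σ x) = v x)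
    {F φ : K[X]} (hF : Irreducible F) (hFm : F.Monic) (hφ : Irreducible φ) (hφm : φ.Monic)
    (hdeg : φ.natDegree = F.natDegree) {θ : L} (hθ : θ ∈ F.aroots L) {μ : WithTop ℚ}
    (h : v.sumMinDist F θ μ < v (aeval θ φ)) : ∃ α ∈ φ.aroots L, μ < v (θ - α) := by
  have hne : φ.aroots L ≠ 0 := by
    rw [ne_eq, ← Multiset.card_eq_zero, IsAlgClosed.card_aroots_eq_natDegree]
    exact hφ.natDegree_pos.ne'
  obtain ⟨α, hα, hmax⟩ := Multiset.exists_max_image (fun a => v (θ - a)) hne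
  refine ⟨α, hα, ?_⟩
  by_contra! hle
  refine h.not_ge ?_
  rw [v.map_aeval_eq_of_natDegree_eq hv hF hFm hφ hφm hdeg hθ hα, v.map_aeval_eq_sum_aroots hFm]
  refine Multiset.sum_map_le_sum_map _ _ fun z hz => ?_
  obtain ⟨σ, hσ⟩ := exists_algEquiv_apply_eq_of_mem_aroots hF hFm hz hθ
  have hσα : σ α ∈ φ.aroots L :=
    mem_aroots.2 ⟨hφm.ne_zero, by rw [aeval_algHom_apply σ, (mem_aroots.1 hα).2, _root_.map_zero]⟩
  have hαz : v (α - z) ≤ v (θ - α) :=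
    calc v (α - z) = v (θ - σ α) := by rw [← hv σ, _root_.map_sub, hσ, v.map_sub_swap]
      _ ≤ v (θ - α) := hmax _ hσα
  rw [v.map_sub_eq_min_of_le hαz]
  exact min_le_min_left _ hle

theorem exists_lt_iff_sumMinDist_lt (hv : ∀ (σ : L ≃ₐ[K] L) (x : L), v (σ x) = v x)
    {F φ : K[X]} (hF : Irreducible F) (hFm : F.Monic) (hφ : Irreducible φ) (hφm : φ.Monic)
    (hdeg : φ.natDegree = F.natDegree) {θ : L} (hθ : θ ∈ F.aroots L) {μ : WithTop ℚ}
    (hμ : μ ≠ ⊤) : (∃ α ∈ φ.aroots L, μ < v (θ - α)) ↔ v.sumMinDist F θ μ < v (aeval θ φ) :=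
  ⟨fun ⟨_, hα, hlt⟩ => v.sumMinDist_lt_map_aeval hv hF hFm hφ hφm hdeg hθ hα hμ hlt,
    v.exists_lt_of_sumMinDist_lt hv hF hFm hφ hφm hdeg hθ⟩

end Threshold

end AddValuation

namespace OkutsuSetup

variable {K : Type} [Field K] [CharZero K] (S : OkutsuSetup K)

def val : AddValuation (AlgebraicClosure K) (WithTop ℚ) :=
  AddValuation.of S.v ((S.v_eq_top_iff 0).2 rfl) S.v_one S.v_min_le_add S.v_mul

theorem val_algEquiv (σ : AlgebraicClosure K ≃ₐ[K] AlgebraicClosure K) (x : AlgebraicClosure K) :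
    S.val (σ x) = S.val x :=
  S.v_aut_invariant ⊤
    (IntermediateField.topEquiv.trans (σ.trans IntermediateField.topEquiv.symm)) ⟨x, trivial⟩

theorem val_nonneg_of_aeval_eq_zero {F : S.integers[X]} (hF : F.Monic) {z : AlgebraicClosure K}
    (hz : aeval z (F.map S.integers.subtype) = 0) : 0 ≤ S.val z :=
  S.val.nonneg_of_isIntegral (fun r => r.2)
    ⟨F, hF, by rwa [← aeval_def, ← aeval_map_algebraMap K]⟩

theorem sumMinDist_zero {F : S.integers[X]} (hF : F.Monic) {θ : AlgebraicClosure K}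
    (hθ : aeval θ (F.map S.integers.subtype) = 0) :
    S.val.sumMinDist (F.map S.integers.subtype) θ 0 = 0 := by
  refine Multiset.sum_eq_zero fun x hx => ?_
  obtain ⟨z, hz, rfl⟩ := Multiset.mem_map.1 hx
  exact min_eq_right (S.val.map_le_sub (S.val_nonneg_of_aeval_eq_zero hF hθ)
    (S.val_nonneg_of_aeval_eq_zero hF (mem_aroots.1 hz).2))

namespace OkutsuData

variable {S} {θ : AlgebraicClosure K} {n : ℕ} (D : OkutsuData S θ n)

theorem m_pos {i : ℕ} (hi : i ≤ D.r + 1) : 0 < D.m i := by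
  rcases Nat.eq_zero_or_pos i with rfl | hi0
  · rw [D.m_zero]
    exact one_pos
  · obtain ⟨η, hη, -⟩ := (D.m_isLeast i hi0 hi).1
    rw [← hη]
    exact minpoly.natDegree_pos (Algebra.IsIntegral.isIntegral η)

theorem mu_ne_top : D.μ D.r ≠ ⊤ := by
  obtain ⟨η, -, hη⟩ := (D.m_isLeast (D.r + 1) le_add_self le_rfl).1
  rw [Nat.add_sub_cancel] at hη
  exact hη.ne_top

theorem le_natDegree_of_mu_lt {η : AlgebraicClosure K} (h : D.μ D.r < S.v (θ - η)) :
    n ≤ (minpoly K η).natDegree :=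
  D.m_last ▸ (D.m_isLeast (D.r + 1) le_add_self le_rfl).2 ⟨η, rfl, by simpa using h⟩

theorem val_sub_root_eq_min {F : K[X]} (hF : Irreducible F) (hFm : F.Monic)
    (hθ : θ ∈ F.aroots (AlgebraicClosure K)) {α : AlgebraicClosure K}
    (hα : (minpoly K α).natDegree < n) (hαμ : S.v (θ - α) = D.μ D.r) {z : AlgebraicClosure K}
    (hz : z ∈ F.aroots (AlgebraicClosure K)) :
    S.val (α - z) = min (S.val (θ - z)) (D.μ D.r) := by
  obtain ⟨σ, hσ⟩ := exists_algEquiv_apply_eq_of_mem_aroots hF hFm hz hθ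
  have h : S.val (α - z) ≤ S.val (θ - α) := by
    rw [← S.val_algEquiv σ, map_sub, hσ, S.val.map_sub_swap]
    by_contra! hlt
    have := D.le_natDegree_of_mu_lt (hαμ.symm.trans_lt hlt)
    rw [minpoly.algEquiv_eq] at this
    omega
  rw [S.val.map_sub_eq_min_of_le h]
  exact congrArg _ hαμ

theorem nsmul_v_evalK_frame_eq {F : S.integers[X]} (hFmonic : F.Monic)
    (hFirr : Irreducible (F.map S.integers.subtype)) (hFdeg : F.natDegree = n)
    (hθ : S.evalK F θ = 0) {Fr : ℕ → S.integers[X]} (hFr : S.IsFrame D Fr) (hFr0 : Fr 0 = 1) :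
    n • S.v (S.evalK (Fr D.r) θ) =
      D.m D.r • S.val.sumMinDist (F.map S.integers.subtype) θ (D.μ D.r) := by
  rcases Nat.eq_zero_or_pos D.r with hr | hr
  · rw [hr, hFr0, D.m_zero, D.mu_zero, S.sumMinDist_zero hFmonic hθ]
    simp [evalK, S.v_one]
  · obtain ⟨α, hαdeg, hαμ, hαmin⟩ := hFr D.r hr le_rfl
    have hα : IsIntegral K α := Algebra.IsIntegral.isIntegral α
    have hFm : (F.map S.integers.subtype).Monic := hFmonic.map _
    have hθ' : θ ∈ (F.map S.integers.subtype).aroots _ := mem_aroots.2 ⟨hFm.ne_zero, hθ⟩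
    have hcross := S.val.natDegree_nsmul_map_aeval_comm S.val_algEquiv hFirr hFm
      (minpoly.irreducible hα) (minpoly.monic hα) hθ'
      (mem_aroots.2 ⟨minpoly.ne_zero hα, minpoly.aeval K α⟩)
    rw [hFmonic.natDegree_map, hFdeg, hαdeg, S.val.map_aeval_eq_sum_aroots hFm] at hcross
    rw [evalK, hαmin]
    refine hcross.trans (congrArg _ (congrArg Multiset.sum (Multiset.map_congr rfl fun z hz => ?_)))
    exact D.val_sub_root_eq_min hFirr hFm hθ' (hαdeg ▸ D.m_lt_n D.r hr le_rfl) hαμ hz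

end OkutsuData

end OkutsuSetup

open OkutsuSetup in
/-- Let `F ∈ 𝓞[x]` be monic irreducible of degree `n` with root `θ`,
of depth `r`, with Okutsu invariants `m_i, μ_i` and an Okutsu frame whose last polynomial
is `F_r` (with the convention `F_0 = 1`).  For `φ ∈ 𝓞[x]` the following are equivalent:
(i) `φ` is monic irreducible of degree `n` with a root `α` such that `v(θ - α) > μ_r`;
(ii) `φ` is monic irreducible of degree `n` and `v(φ(θ)) > (n/m_r)·v(F_r(θ))`. -/
theorem okutsu_stmt_16 {K : Type} [Field K] [CharZero K] (S : OkutsuSetup K)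
    (F : Polynomial S.integers) (hFmonic : F.Monic)
    (hFirr : Irreducible (F.map S.integers.subtype))
    (n : ℕ) (hFdeg : F.natDegree = n)
    (θ : AlgebraicClosure K) (hθ : S.evalK F θ = 0)
    (D : OkutsuData S θ n)
    (Fr : ℕ → Polynomial S.integers) (hFr : S.IsFrame D Fr)
    (hFr0 : Fr 0 = 1)
    (φ : Polynomial S.integers) :
    (φ.Monic ∧ Irreducible (φ.map S.integers.subtype) ∧ φ.natDegree = n ∧
      ∃ α : AlgebraicClosure K, S.evalK φ α = 0 ∧ D.μ D.r < S.v (θ - α)) ↔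
    (φ.Monic ∧ Irreducible (φ.map S.integers.subtype) ∧ φ.natDegree = n ∧
      ∀ c : ℚ, S.v (S.evalK (Fr D.r) θ) = (c : WithTop ℚ) →
        ((((n : ℚ) / (D.m D.r : ℚ)) * c : ℚ) : WithTop ℚ) < S.v (S.evalK φ θ)) := by
  set FK := F.map S.integers.subtype
  have hFKm : FK.Monic := hFmonic.map _
  have hθ' : θ ∈ FK.aroots (AlgebraicClosure K) := mem_aroots.2 ⟨hFKm.ne_zero, hθ⟩
  obtain ⟨c, hc, hT⟩ := WithTop.exists_coe_eq_and_eq_div_mul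
    (D.m_last ▸ (D.m_pos le_rfl).ne') (D.m_pos (Nat.le_succ _)).ne'
    (S.val.sumMinDist_ne_top FK θ D.mu_ne_top)
    (D.nsmul_v_evalK_frame_eq hFmonic hFirr hFdeg hθ hFr hFr0)
  refine and_congr_right fun hφm => and_congr_right fun hφirr => and_congr_right fun hφdeg => ?_
  have hdeg : (φ.map S.integers.subtype).natDegree = FK.natDegree := by
    rw [hφm.natDegree_map, hFmonic.natDegree_map, hφdeg, hFdeg]
  rw [hc]
  simp only [WithTop.coe_inj, forall_eq', ← hT]
  refine Iff.trans ?_ (S.val.exists_lt_iff_sumMinDist_lt S.val_algEquiv hFirr hFKm hφirr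
    (hφm.map _) hdeg hθ' D.mu_ne_top)
  exact exists_congr fun α => and_congr_left fun _ =>
    (mem_aroots.trans (and_iff_right (hφm.map _).ne_zero)).symm
end
end
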